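/- arXiv:2505.06082 — 2 statements merged into one kernel-verified Lean document; each statement's English description precedes it below -/
import Mathlib

section
/- Discrete mod-2 intersection invariance on the 3-torus: if S is a 1-cycle of the N×N×N 3-torus lattice, then the parity of |S ∩ P_x| is the same for all x ∈ ZMod N; that is, the mod-2 intersection number of a 1-cycle with the transverse plane cocycle does not depend on where the plane is placed. -/
/-- The standard basis vector `eᵢ` of `(ZMod N)³` (vertices indexed by `Fin 3 → ZMod N`). -/
def basis3 (N : ℕ) (i : Fin 3) : Fin 3 → ZMod N := fun j => if j = i then 1 else 0

/-- The star of a vertex `v` of the `N × N × N` 3-torus lattice: the six edges incident to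
`v`, namely `(v, i)` and `(v - eᵢ, i)` for `i ∈ Fin 3`. -/
def star3 (N : ℕ) (v : Fin 3 → ZMod N) : Set ((Fin 3 → ZMod N) × Fin 3) :=
  {e | ∃ i : Fin 3, e = (v, i) ∨ e = (v - basis3 N i, i)}

/-- The boundary of a face `(v, k)` of the 3-torus lattice: the four edges
`(v, i)`, `(v, j)`, `(v + e_j, i)`, `(v + e_i, j)` where `{i, j} = {0,1,2} \ {k}`. -/
def faceBd3 (N : ℕ) (f : (Fin 3 → ZMod N) × Fin 3) : Set ((Fin 3 → ZMod N) × Fin 3) :=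
  {e | ∃ i : Fin 3, i ≠ f.2 ∧
      (e = (f.1, i) ∨ ∃ j : Fin 3, j ≠ f.2 ∧ j ≠ i ∧ e = (f.1 + basis3 N j, i))}

/-- `S` is a 1-cycle of the 3-torus lattice. -/
def isCycle3 (N : ℕ) (S : Set ((Fin 3 → ZMod N) × Fin 3)) : Prop :=
  ∀ v : Fin 3 → ZMod N, Even ((S ∩ star3 N v).ncard)

/-- `T` is a 1-cocycle of the 3-torus lattice. -/
def isCocycle3 (N : ℕ) (T : Set ((Fin 3 → ZMod N) × Fin 3)) : Prop :=
  ∀ f : (Fin 3 → ZMod N) × Fin 3, Even ((T ∩ faceBd3 N f).ncard)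

/-- The plane `P_x`: all direction-0 edges whose base point has first coordinate `x`;
a non-compressible 2-torus in the 3-torus. -/
def plane3 (N : ℕ) (x : ZMod N) : Set ((Fin 3 → ZMod N) × Fin 3) :=
  {e | ∃ y z : ZMod N, e = (![x, y, z], 0)}

/-- The straight loop `L = {((t,0,0), 0) : t ∈ ZMod N}`, a non-contractible loop. -/
def loop3 (N : ℕ) : Set ((Fin 3 → ZMod N) × Fin 3) :=
  {e | ∃ t : ZMod N, e = (![t, 0, 0], 0)}

/-- The coboundary of an edge `e`: all faces `f` with `e ∈ ∂f`. -/
def coface3 (N : ℕ) (e : (Fin 3 → ZMod N) × Fin 3) : Set ((Fin 3 → ZMod N) × Fin 3) :=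
  {f | e ∈ faceBd3 N f}

/-- The boundary of a cube `c`: the six faces `(c, k)` and `(c + e_k, k)` for `k ∈ Fin 3`. -/
def cubeBd3 (N : ℕ) (c : Fin 3 → ZMod N) : Set ((Fin 3 → ZMod N) × Fin 3) :=
  {f | ∃ k : Fin 3, f = (c, k) ∨ f = (c + basis3 N k, k)}

lemma ncard_cast2 {α : Type*} [Fintype α] (A : Set α) [DecidablePred (· ∈ A)] :
    ((A.ncard : ZMod 2)) = ∑ e : α, if e ∈ A then (1 : ZMod 2) else 0 := by
  have h2 : A.toFinset = Finset.univ.filter (· ∈ A) := by ext e; simp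
  rw [Set.ncard_eq_toFinset_card', h2, Finset.sum_boole]

lemma mem_star3 {N : ℕ} (v : Fin 3 → ZMod N) (e : (Fin 3 → ZMod N) × Fin 3) :
    e ∈ star3 N v ↔ v = e.1 ∨ v = e.1 + basis3 N e.2 := by
  constructor
  · rintro ⟨i, h | h⟩ <;> subst h <;> simp
  · rintro (h | h)
    · exact ⟨e.2, Or.inl (by rw [h])⟩
    · exact ⟨e.2, Or.inr (by rw [h]; simp)⟩

lemma mem_plane3 {N : ℕ} (x : ZMod N) (e : (Fin 3 → ZMod N) × Fin 3) :
    e ∈ plane3 N x ↔ e.1 0 = x ∧ e.2 = 0 := by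
  constructor
  · rintro ⟨y, z, rfl⟩; simp
  · rintro ⟨h0, h2⟩
    refine ⟨e.1 1, e.1 2, ?_⟩
    have h1 : e.1 = ![x, e.1 1, e.1 2] := by
      funext j; fin_cases j <;> simp [h0]
    rw [Prod.ext_iff]; exact ⟨h1, h2⟩

lemma plane_step {N : ℕ} (hN : 2 ≤ N) (S : Set ((Fin 3 → ZMod N) × Fin 3))
    (hS : isCycle3 N S) (c : ZMod N) :
    ((S ∩ plane3 N c).ncard : ZMod 2) = ((S ∩ plane3 N (c - 1)).ncard : ZMod 2) := by
  classical
  haveI : NeZero N := ⟨by omega⟩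
  haveI : Fact (1 < N) := ⟨by omega⟩
  have hone : (1 : ZMod N) ≠ 0 := one_ne_zero
  set T : Finset (Fin 3 → ZMod N) := Finset.univ.filter (fun v => v 0 = c) with hT
  have hzero : ∀ v : Fin 3 → ZMod N, (((S ∩ star3 N v).ncard : ZMod 2)) = 0 := by
    intro v
    obtain ⟨k, hk⟩ := hS v
    rw [hk]; push_cast; rw [CharTwo.add_self_eq_zero]
  have inner : ∀ e : (Fin 3 → ZMod N) × Fin 3,
      (∑ v ∈ T, if e ∈ star3 N v then (1 : ZMod 2) else 0)
        = (if e ∈ plane3 N c then (1 : ZMod 2) else 0)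
          + (if e ∈ plane3 N (c - 1) then (1 : ZMod 2) else 0) := by
    intro e
    have hbz : basis3 N e.2 ≠ 0 := by
      intro h
      have h1 : (1 : ZMod N) = 0 := by simpa [basis3] using congrFun h e.2
      exact hone h1
    have hb : e.1 ≠ e.1 + basis3 N e.2 := fun h => hbz (left_eq_add.mp h)
    have hsplit : ∀ v ∈ T, (if e ∈ star3 N v then (1 : ZMod 2) else 0)
        = (if v = e.1 then (1 : ZMod 2) else 0)
          + (if v = e.1 + basis3 N e.2 then (1 : ZMod 2) else 0) := by
      intro v _
      by_cases h1 : v = e.1 <;> by_cases h2 : v = e.1 + basis3 N e.2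
      · exact absurd (h1 ▸ h2) hb
      · simp [mem_star3, h1, h2, hbz]
      · simp [mem_star3, h1, h2, hbz]
      · simp [mem_star3, h1, h2, hbz]
    rw [Finset.sum_congr rfl hsplit, Finset.sum_add_distrib,
        Finset.sum_ite_eq' T e.1 (fun _ => (1 : ZMod 2)),
        Finset.sum_ite_eq' T (e.1 + basis3 N e.2) (fun _ => (1 : ZMod 2))]
    have hmT : ∀ w : Fin 3 → ZMod N, w ∈ T ↔ w 0 = c := by
      intro w; simp [hT]
    by_cases h2 : e.2 = 0
    · have hb0 : (e.1 + basis3 N e.2) 0 = e.1 0 + 1 := by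
        simp [basis3, h2, Pi.add_apply]
      rw [if_congr (hmT e.1) rfl rfl, if_congr (hmT _) rfl rfl, hb0]
      simp only [mem_plane3, h2, and_true]
      congr 1
      exact (if_congr eq_sub_iff_add_eq rfl rfl).symm
    · have hb0 : (e.1 + basis3 N e.2) 0 = e.1 0 := by
        have h02 : (0 : Fin 3) ≠ e.2 := fun h => h2 h.symm
        simp [basis3, h02, Pi.add_apply]
      rw [if_congr (hmT e.1) rfl rfl, if_congr (hmT _) rfl rfl, hb0,
          CharTwo.add_self_eq_zero]
      have p1 : e ∉ plane3 N c := by rw [mem_plane3]; tauto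
      have p2 : e ∉ plane3 N (c - 1) := by rw [mem_plane3]; tauto
      simp [p1, p2]
  have hsum : (0 : ZMod 2) = ∑ v ∈ T, ((S ∩ star3 N v).ncard : ZMod 2) :=
    (Finset.sum_eq_zero fun v _ => hzero v).symm
  have expand : ∑ v ∈ T, ((S ∩ star3 N v).ncard : ZMod 2)
      = ((S ∩ plane3 N c).ncard : ZMod 2) + ((S ∩ plane3 N (c - 1)).ncard : ZMod 2) := by
    calc ∑ v ∈ T, ((S ∩ star3 N v).ncard : ZMod 2)
        = ∑ v ∈ T, ∑ e : (Fin 3 → ZMod N) × Fin 3,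
            (if e ∈ S then (if e ∈ star3 N v then (1 : ZMod 2) else 0) else 0) := by
          refine Finset.sum_congr rfl fun v _ => ?_
          rw [ncard_cast2]
          refine Finset.sum_congr rfl fun e _ => ?_
          by_cases h1 : e ∈ S <;> by_cases h2 : e ∈ star3 N v <;>
            simp [Set.mem_inter_iff, h1, h2]
      _ = ∑ e : (Fin 3 → ZMod N) × Fin 3,
            (if e ∈ S then (∑ v ∈ T, if e ∈ star3 N v then (1 : ZMod 2) else 0) else 0) := by
          rw [Finset.sum_comm]
          refine Finset.sum_congr rfl fun e _ => ?_
          by_cases h1 : e ∈ S <;> simp [h1]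
      _ = ∑ e : (Fin 3 → ZMod N) × Fin 3,
            ((if e ∈ S ∩ plane3 N c then (1 : ZMod 2) else 0)
              + (if e ∈ S ∩ plane3 N (c - 1) then (1 : ZMod 2) else 0)) := by
          refine Finset.sum_congr rfl fun e _ => ?_
          by_cases h1 : e ∈ S
          · rw [if_pos h1, inner e]
            by_cases h2 : e ∈ plane3 N c <;> by_cases h3 : e ∈ plane3 N (c - 1) <;>
              simp [Set.mem_inter_iff, h1, h2, h3]
          · by_cases h2 : e ∈ plane3 N c <;> by_cases h3 : e ∈ plane3 N (c - 1) <;>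
              simp [Set.mem_inter_iff, h1, h2, h3]
      _ = ((S ∩ plane3 N c).ncard : ZMod 2) + ((S ∩ plane3 N (c - 1)).ncard : ZMod 2) := by
          rw [Finset.sum_add_distrib, ncard_cast2, ncard_cast2]
  have h0 : ((S ∩ plane3 N c).ncard : ZMod 2) + ((S ∩ plane3 N (c - 1)).ncard : ZMod 2) = 0 := by
    rw [← expand, ← hsum]
  have h1 := eq_neg_of_add_eq_zero_left h0
  rwa [ZMod.neg_eq_self_mod_two] at h1


/-- The mod-2 intersection number of a 1-cycle of the 3-torus lattice with the transverse
plane `P x` does not depend on where the plane is placed. -/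
theorem torus3_cycle_plane_parity_invariant (N : ℕ) (hN : 2 ≤ N)
    (S : Set ((Fin 3 → ZMod N) × Fin 3)) (hS : isCycle3 N S) (x x' : ZMod N) :
    (S ∩ plane3 N x).ncard % 2 = (S ∩ plane3 N x').ncard % 2 := by
  classical
  haveI : NeZero N := ⟨by omega⟩
  have hstep : ∀ c : ZMod N,
      ((S ∩ plane3 N (c + 1)).ncard : ZMod 2) = ((S ∩ plane3 N c).ncard : ZMod 2) := by
    intro c
    have h := plane_step hN S hS (c + 1)
    simpa using h
  have hn : ∀ n : ℕ,
      ((S ∩ plane3 N (x + (n : ZMod N))).ncard : ZMod 2)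
        = ((S ∩ plane3 N x).ncard : ZMod 2) := by
    intro n
    induction n with
    | zero => simp
    | succ k ih =>
      have h1 : (x + ((k + 1 : ℕ) : ZMod N)) = (x + (k : ZMod N)) + 1 := by push_cast; ring
      rw [h1, hstep (x + (k : ZMod N)), ih]
  have hx : x + (((x' - x).val : ℕ) : ZMod N) = x' := by
    rw [ZMod.natCast_rightInverse (x' - x)]
    ring
  have hfinal := hn (x' - x).val
  rw [hx] at hfinal
  exact ((ZMod.natCast_eq_natCast_iff' _ _ _).mp hfinal).symm
end

section
/- If L ≥ 3 is odd, then the minimum cardinality of a 1-cycle S of the L×L Klein-bottle lattice whose intersection with the seam has odd cardinality is exactly L: the purely horizontal loop through the fixed row y = (L−1)/2 of the reflection y ↦ L−1−y is a 1-cycle of cardinality L crossing the seam exactly once, and no such cycle has fewer than L edges; hence for odd code distance the Klein-bottle code offers no improvement over the toric code. -/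
/-- The second endpoint of the horizontal edge based at `p` in the `L × L` Klein-bottle
lattice: identifying `ZMod L` with `{0, …, L-1}`, we have `φ(x, y) = (x+1, y)` if
`x ≠ L-1` (i.e. `x ≠ -1` in `ZMod L`) and `φ(L-1, y) = (0, L-1-y)` (the
orientation-reversing identification of the Klein bottle, with `L-1-y = -1-y` in
`ZMod L`). -/
def kleinPhi (L : ℕ) (p : ZMod L × ZMod L) : ZMod L × ZMod L :=
  if p.1 = -1 then (0, -1 - p.2) else (p.1 + 1, p.2)

/-- The endpoints of an edge of the Klein-bottle lattice: the horizontal edge `(p, 0)`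
has endpoints `p` and `kleinPhi L p`; the vertical edge `(p, 1)` has endpoints `p` and
`p + (0, 1)`. -/
def kleinEnds (L : ℕ) (e : (ZMod L × ZMod L) × Fin 2) : Set (ZMod L × ZMod L) :=
  if e.2 = 0 then {e.1, kleinPhi L e.1} else {e.1, e.1 + (0, 1)}

/-- `S` is a 1-cycle of the Klein-bottle lattice: every vertex is an endpoint of an even
number of edges of `S`. -/
def kleinIsCycle (L : ℕ) (S : Set ((ZMod L × ZMod L) × Fin 2)) : Prop :=
  ∀ v : ZMod L × ZMod L, Even {e | e ∈ S ∧ v ∈ kleinEnds L e}.ncard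

/-- The seam of the Klein-bottle lattice: the `L` horizontal edges `h(L-1, y)`,
`y ∈ ZMod L` (with `L-1 = -1` in `ZMod L`). -/
def kleinSeam (L : ℕ) : Set ((ZMod L × ZMod L) × Fin 2) :=
  {e | ∃ y : ZMod L, e = ((-1, y), 0)}

/-- The purely horizontal loop through the row `y = (L-1)/2` (the fixed row of the
reflection `y ↦ L-1-y` when `L` is odd). -/
def kleinMidLoop (L : ℕ) : Set ((ZMod L × ZMod L) × Fin 2) :=
  {e | ∃ x : ZMod L, e = ((x, (((L - 1) / 2 : ℕ) : ZMod L)), 0)}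

/-! Summing vertex degrees over a column `{x = a}` counts every vertical edge of a 1-cycle zero
or two times and every horizontal edge once or not at all, so the horizontal edges of the
cycle based in column `a` and in column `a + 1` have the same parity. An odd number of seam
crossings (column `-1`) therefore forces an odd, hence nonzero, number of horizontal edges in
each of the `L` columns. Conversely, for odd `L` the reflection `y ↦ L - 1 - y` fixes the middle
row, which thus closes up into a 1-cycle of length `L` through the seam. -/

open Finset

theorem even_card_filter_xor_of_even_degree {V E : Type*} [DecidableEq V] {F : Finset E}
    {s t : E → V} (hst : ∀ e ∈ F, s e ≠ t e) (hdeg : ∀ v, Even #{e ∈ F | v = s e ∨ v = t e})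
    (C : Finset V) : Even #{e ∈ F | Xor (s e ∈ C) (t e ∈ C)} := by
  have hxor (p q : Prop) [Decidable p] [Decidable q] :
      (if Xor p q then 1 else 0 : ZMod 2) = (if p then 1 else 0) + (if q then 1 else 0) := by
    by_cases p <;> by_cases q <;> simp [*]; decide
  have hend (e) (he : e ∈ F) (v : V) : (if v = s e ∨ v = t e then 1 else 0 : ZMod 2) =
      (if v = s e then 1 else 0) + (if v = t e then 1 else 0) := by
    by_cases h₁ : v = s e <;> by_cases h₂ : v = t e
    · exact absurd (h₁.symm.trans h₂) (hst e he)
    all_goals simp [h₁, h₂, hst e he, (hst e he).symm]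
  rw [← ZMod.natCast_eq_zero_iff_even, ← sum_boole]
  calc ∑ e ∈ F, (if Xor (s e ∈ C) (t e ∈ C) then 1 else 0 : ZMod 2)
      = ∑ e ∈ F, ∑ v ∈ C, (if v = s e ∨ v = t e then 1 else 0 : ZMod 2) := by
        refine sum_congr rfl fun e he => ?_
        simp only [hxor, hend e he, sum_add_distrib, sum_ite_eq']
    _ = ∑ v ∈ C, (#{e ∈ F | v = s e ∨ v = t e} : ZMod 2) := by
        rw [sum_comm]; simp only [sum_boole]
    _ = 0 := sum_eq_zero fun v _ => (ZMod.natCast_eq_zero_iff_even).2 (hdeg v)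

theorem ZMod.forall_of_add_one {n : ℕ} [NeZero n] {P : ZMod n → Prop} {a : ZMod n} (ha : P a)
    (hP : ∀ b, P b → P (b + 1)) (b : ZMod n) : P b := by
  have key (k : ℕ) : P (a + k) := by
    induction k with
    | zero => simpa using ha
    | succ k ih => simpa [add_assoc] using hP _ ih
  simpa using key (b - a).val

theorem ZMod.neg_one_sub_natCast_pred_div_two {n : ℕ} (hn : Odd n) :
    (-1 : ZMod n) - (((n - 1) / 2 : ℕ) : ZMod n) = (((n - 1) / 2 : ℕ) : ZMod n) := by
  obtain ⟨m, rfl⟩ := hn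
  rw [sub_eq_iff_eq_add, ← Nat.cast_add,
    show (2 * m + 1 - 1) / 2 + (2 * m + 1 - 1) / 2 = 2 * m by omega, eq_comm,
    ← add_eq_zero_iff_eq_neg]
  exact_mod_cast ZMod.natCast_self (2 * m + 1)

section Klein

variable {L : ℕ}

def kleinTarget (L : ℕ) (e : (ZMod L × ZMod L) × Fin 2) : ZMod L × ZMod L :=
  if e.2 = 0 then kleinPhi L e.1 else e.1 + (0, 1)

def kleinHorizontalAt (L : ℕ) (a : ZMod L) : Set ((ZMod L × ZMod L) × Fin 2) :=
  {e | e.2 = 0 ∧ e.1.1 = a}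

theorem mem_kleinEnds {e : (ZMod L × ZMod L) × Fin 2} {v : ZMod L × ZMod L} :
    v ∈ kleinEnds L e ↔ v = e.1 ∨ v = kleinTarget L e := by
  unfold kleinEnds kleinTarget; split <;> rfl

theorem kleinTarget_fst (e : (ZMod L × ZMod L) × Fin 2) :
    (kleinTarget L e).1 = e.1.1 + if e.2 = 0 then 1 else 0 := by
  unfold kleinTarget kleinPhi
  split_ifs <;> simp_all

theorem kleinSeam_eq : kleinSeam L = kleinHorizontalAt L (-1) := by
  ext ⟨⟨x, y⟩, i⟩
  simp only [kleinSeam, kleinHorizontalAt, Set.mem_ofPred_eq, Prod.mk.injEq]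
  constructor
  · rintro ⟨y, ⟨rfl, rfl⟩, rfl⟩; exact ⟨rfl, rfl⟩
  · rintro ⟨rfl, rfl⟩; exact ⟨y, ⟨rfl, rfl⟩, rfl⟩

theorem kleinTarget_midRow (hL : Odd L) (x : ZMod L) :
    kleinTarget L ((x, (((L - 1) / 2 : ℕ) : ZMod L)), 0) =
      (x + 1, (((L - 1) / 2 : ℕ) : ZMod L)) := by
  by_cases hx : x = -1 <;>
    simp [kleinTarget, kleinPhi, hx, ZMod.neg_one_sub_natCast_pred_div_two hL]

theorem kleinMidLoop_eq_range :
    kleinMidLoop L =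
      Set.range fun x : ZMod L => ((x, (((L - 1) / 2 : ℕ) : ZMod L)), (0 : Fin 2)) := by
  ext e; simp [kleinMidLoop, eq_comm]

theorem ncard_kleinMidLoop : (kleinMidLoop L).ncard = L := by
  rw [kleinMidLoop_eq_range, Set.ncard_range_of_injective fun x y h => by simpa using h,
    Nat.card_zmod]

theorem kleinMidLoop_inter_kleinSeam :
    kleinMidLoop L ∩ kleinSeam L = {((-1, (((L - 1) / 2 : ℕ) : ZMod L)), 0)} := by
  ext e
  simp only [kleinMidLoop, kleinSeam, Set.mem_inter_iff, Set.mem_ofPred_eq, Set.mem_singleton_iff]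
  constructor
  · rintro ⟨⟨x, rfl⟩, y, h⟩
    simp_all
  · rintro rfl
    exact ⟨⟨-1, rfl⟩, _, rfl⟩

variable [Fact (1 < L)]

theorem kleinTarget_ne (e : (ZMod L × ZMod L) × Fin 2) : e.1 ≠ kleinTarget L e := by
  by_cases h : e.2 = 0
  · intro he
    have := congrArg Prod.fst he
    rw [kleinTarget_fst, if_pos h, left_eq_add] at this
    exact one_ne_zero this
  · intro he
    have := congrArg Prod.snd he
    simp only [kleinTarget, if_neg h, Prod.snd_add, left_eq_add] at this
    exact one_ne_zero this

theorem xor_kleinTarget_fst_eq_iff (e : (ZMod L × ZMod L) × Fin 2) (a : ZMod L) :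
    Xor (e.1.1 = a + 1) ((kleinTarget L e).1 = a + 1) ↔
      e ∈ kleinHorizontalAt L (a + 1) ∨ e ∈ kleinHorizontalAt L a := by
  rw [kleinTarget_fst]
  by_cases h : e.2 = 0
  · have : a + 1 ≠ a := fun h => one_ne_zero (add_eq_left.1 h)
    simp only [kleinHorizontalAt, Set.mem_ofPred_eq, h, if_true, true_and, add_left_inj]
    grind
  · simp [kleinHorizontalAt, h]

theorem odd_ncard_inter_kleinHorizontalAt_add_one_iff {S : Set ((ZMod L × ZMod L) × Fin 2)}
    (hS : kleinIsCycle L S) (a : ZMod L) :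
    Odd (S ∩ kleinHorizontalAt L (a + 1)).ncard ↔ Odd (S ∩ kleinHorizontalAt L a).ncard := by
  classical
  have hncard (p : (ZMod L × ZMod L) × Fin 2 → Prop) :
      {e | e ∈ S ∧ p e}.ncard = #{e ∈ S.toFinset | p e} := by
    rw [← Set.ncard_coe_finset, coe_filter]
    simp only [Set.mem_toFinset]
  have hdeg (v : ZMod L × ZMod L) : Even #{e ∈ S.toFinset | v = e.1 ∨ v = kleinTarget L e} := by
    have := hS v
    rw [hncard] at this
    convert this using 4
    exact mem_kleinEnds.symm
  have hcut := even_card_filter_xor_of_even_degree (fun e _ => kleinTarget_ne e) hdeg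
    (univ.filter fun v : ZMod L × ZMod L => v.1 = a + 1)
  simp only [mem_filter, mem_univ, true_and, xor_kleinTarget_fst_eq_iff, filter_or] at hcut
  rw [card_union_of_disjoint (disjoint_filter.2 fun e _ h₁ h₂ =>
    one_ne_zero (left_eq_add.1 (h₂.2.symm.trans h₁.2))), Nat.even_add] at hcut
  rw [Set.inter_def, Set.inter_def, hncard, hncard, ← Nat.not_even_iff_odd,
    ← Nat.not_even_iff_odd, not_iff_not]
  exact hcut

theorem le_ncard_of_kleinIsCycle_of_odd_seam {S : Set ((ZMod L × ZMod L) × Fin 2)}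
    (hS : kleinIsCycle L S) (hseam : Odd (S ∩ kleinSeam L).ncard) : L ≤ S.ncard := by
  have hcol (a : ZMod L) : Odd (S ∩ kleinHorizontalAt L a).ncard :=
    ZMod.forall_of_add_one (kleinSeam_eq (L := L) ▸ hseam)
      (fun b hb => (odd_ncard_inter_kleinHorizontalAt_add_one_iff hS b).2 hb) a
  have hsurj : Set.univ ⊆ (fun e : (ZMod L × ZMod L) × Fin 2 => e.1.1) '' S := fun a _ => by
    obtain ⟨e, heS, -, rfl⟩ := Set.nonempty_of_ncard_ne_zero (hcol a).pos.ne'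
    exact ⟨e, heS, rfl⟩
  calc L = (Set.univ : Set (ZMod L)).ncard := by rw [Set.ncard_univ, Nat.card_zmod]
    _ ≤ _ := Set.ncard_le_ncard hsurj
    _ ≤ S.ncard := Set.ncard_image_le S.toFinite

theorem kleinIsCycle_kleinMidLoop (hL : Odd L) : kleinIsCycle L (kleinMidLoop L) := by
  rintro ⟨w, y⟩
  set c : ZMod L := (((L - 1) / 2 : ℕ) : ZMod L)
  have hends (x : ZMod L) : (w, y) ∈ kleinEnds L ((x, c), 0) ↔ y = c ∧ (x = w ∨ x = w - 1) := by
    rw [mem_kleinEnds, kleinTarget_midRow hL, eq_sub_iff_add_eq]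
    simp only [Prod.ext_iff]
    grind
  by_cases hy : y = c
  · have : {e | e ∈ kleinMidLoop L ∧ (w, y) ∈ kleinEnds L e} =
        {((w, c), 0), ((w - 1, c), 0)} := by
      ext e
      constructor
      · rintro ⟨⟨x, rfl⟩, he⟩
        rcases ((hends x).1 he).2 with rfl | rfl <;> simp [c]
      · rintro (rfl | rfl) <;> exact ⟨⟨_, rfl⟩, (hends _).2 ⟨hy, by simp⟩⟩
    rw [this, Set.ncard_pair (by simp [eq_sub_iff_add_eq])]
    exact even_two
  · have : {e | e ∈ kleinMidLoop L ∧ (w, y) ∈ kleinEnds L e} = ∅ :=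
      Set.eq_empty_of_forall_notMem fun e ⟨⟨x, hx⟩, he⟩ => hy ((hends x).1 (hx ▸ he)).1
    rw [this, Set.ncard_empty]
    exact Even.zero

end Klein

/-- For odd `L ≥ 3`, the minimum cardinality of a 1-cycle of the `L × L` Klein-bottle
lattice crossing the seam an odd number of times is exactly `L`: the horizontal loop
through the fixed row `y = (L-1)/2` is a 1-cycle of cardinality `L` crossing the seam
exactly once, and no such cycle has fewer than `L` edges; hence for odd code distance the
Klein-bottle code offers no improvement over the toric code. -/
theorem klein_odd_distance (L : ℕ) (hL : 3 ≤ L) (hLodd : Odd L) :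
    IsLeast {k : ℕ | ∃ S : Set ((ZMod L × ZMod L) × Fin 2),
        kleinIsCycle L S ∧ Odd ((S ∩ kleinSeam L).ncard) ∧ S.ncard = k} L ∧
    kleinIsCycle L (kleinMidLoop L) ∧ (kleinMidLoop L).ncard = L ∧
    (kleinMidLoop L ∩ kleinSeam L).ncard = 1 := by
  have : Fact (1 < L) := ⟨by omega⟩
  have hseam : (kleinMidLoop L ∩ kleinSeam L).ncard = 1 := by
    rw [kleinMidLoop_inter_kleinSeam, Set.ncard_singleton]
  refine ⟨⟨⟨kleinMidLoop L, kleinIsCycle_kleinMidLoop hLodd, hseam ▸ odd_one,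
    ncard_kleinMidLoop⟩, ?_⟩, kleinIsCycle_kleinMidLoop hLodd, ncard_kleinMidLoop, hseam⟩
  rintro k ⟨S, hS, hodd, rfl⟩
  exact le_ncard_of_kleinIsCycle_of_odd_seam hS hodd
end
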